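/- With the tensor-product setup over GF(3): C_V(d₂) = span{e⊗e⊗x, (e⊗f + f⊗e)⊗x : x ∈ {e,f}} and [V,d₂] = span{e⊗e⊗x, (e⊗f − f⊗e)⊗x : x ∈ {e,f}} both have dimension 4, and [V,d₂,d₂] = span{e⊗e⊗x : x ∈ {e,f}} has dimension 2; in particular d₂ does not act quadratically (i.e. (d₂−1)² ≠ 0 on V) and C_V(d₂) is not totally isotropic with respect to B. -/
import Mathlib

noncomputable section

open TensorProduct

/-- The field `GF(3)`. -/
abbrev F3 := ZMod 3
/-- The 2-dimensional symplectic space `W` over `GF(3)`. -/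
abbrev W := Fin 2 → F3
/-- `V = W ⊗ W ⊗ W`. -/
abbrev V := W ⊗[F3] (W ⊗[F3] W)

noncomputable instance : AddCommGroup V := inferInstance

/-- The basis vector `e` of `W`. -/
def e : W := ![1, 0]
/-- The basis vector `f` of `W`. -/
def f : W := ![0, 1]

/-- The linear automorphism `d` of `W` with `d e = e`, `d f = e + f`. -/
def d : W →ₗ[F3] W := Matrix.toLin' !![1, 1; 0, 1]
/-- The inverse of `d`: `d⁻¹ e = e`, `d⁻¹ f = f - e`. -/
def dinv : W →ₗ[F3] W := Matrix.toLin' !![1, -1; 0, 1]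

/-- `d₁ = d ⊗ 1 ⊗ 1`. -/
def d₁ : V →ₗ[F3] V := TensorProduct.map d LinearMap.id
/-- `d₂ = d ⊗ d⁻¹ ⊗ 1`. -/
def d₂ : V →ₗ[F3] V := TensorProduct.map d (TensorProduct.map dinv LinearMap.id)
/-- `d₃ = d ⊗ d ⊗ d`. -/
def d₃ : V →ₗ[F3] V := TensorProduct.map d (TensorProduct.map d d)

/-- The alternating form `⟨·,·⟩` on `W` with `⟨e,f⟩ = 1 = -⟨f,e⟩`. -/
def ω : LinearMap.BilinForm F3 W := Matrix.toLinearMap₂' F3 !![0, 1; -1, 0]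

/-- The form `B` on `V` with `B(v₁⊗v₂⊗v₃, w₁⊗w₂⊗w₃) = ⟨v₁,w₁⟩⟨v₂,w₂⟩⟨v₃,w₃⟩`. -/
def B : LinearMap.BilinForm F3 V :=
  LinearMap.BilinForm.tmul ω (LinearMap.BilinForm.tmul ω ω)

/-- The fixed space `C_V(g) = ker (g - 1)`. -/
def CV (g : V →ₗ[F3] V) : Submodule F3 V := LinearMap.ker ((g - (LinearMap.id : V →ₗ[F3] V)))
/-- The commutator space `[V,g] = im (g - 1)`. -/
def comm1 (g : V →ₗ[F3] V) : Submodule F3 V := LinearMap.range ((g - (LinearMap.id : V →ₗ[F3] V)))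
/-- The iterated commutator space `[V,g,g] = im ((g - 1)²)`. -/
def comm2 (g : V →ₗ[F3] V) : Submodule F3 V :=
  LinearMap.range (((g - (LinearMap.id : V →ₗ[F3] V)) ∘ₗ (g - (LinearMap.id : V →ₗ[F3] V))))
/-- A subspace `U` is totally isotropic if `B` vanishes identically on `U × U`. -/
def TotallyIsotropic (U : Submodule F3 V) : Prop := ∀ u ∈ U, ∀ v ∈ U, B u v = 0

/-! ### Auxiliary lemmas -/

local notation "Eee" => e ⊗ₜ[F3] (e ⊗ₜ[F3] e)
local notation "Eef" => e ⊗ₜ[F3] (e ⊗ₜ[F3] f)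
local notation "Efe" => e ⊗ₜ[F3] (f ⊗ₜ[F3] e)
local notation "Eff" => e ⊗ₜ[F3] (f ⊗ₜ[F3] f)
local notation "Fee" => f ⊗ₜ[F3] (e ⊗ₜ[F3] e)
local notation "Fef" => f ⊗ₜ[F3] (e ⊗ₜ[F3] f)
local notation "Ffe" => f ⊗ₜ[F3] (f ⊗ₜ[F3] e)
local notation "Fff" => f ⊗ₜ[F3] (f ⊗ₜ[F3] f)

lemma d_e : d e = e := by
  ext i; fin_cases i <;> simp [d, e, Matrix.toLin'_apply, Matrix.mulVec, dotProduct]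
lemma d_f : d f = e + f := by
  ext i; fin_cases i <;> simp [d, e, f, Matrix.toLin'_apply, Matrix.mulVec, dotProduct]
lemma dinv_e : dinv e = e := by
  ext i; fin_cases i <;> simp [dinv, e, Matrix.toLin'_apply, Matrix.mulVec, dotProduct]
lemma dinv_f : dinv f = f - e := by
  ext i; fin_cases i <;> simp [dinv, e, f, Matrix.toLin'_apply, Matrix.mulVec, dotProduct]

@[simp] lemma ω_ee : ω e e = 0 := by simp [ω, e, Matrix.toLinearMap₂'_apply]
@[simp] lemma ω_ef : ω e f = 1 := by simp [ω, e, f, Matrix.toLinearMap₂'_apply]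
@[simp] lemma ω_fe : ω f e = -1 := by simp [ω, e, f, Matrix.toLinearMap₂'_apply]
@[simp] lemma ω_ff : ω f f = 0 := by simp [ω, f, Matrix.toLinearMap₂'_apply]

@[simp] lemma B_tmul (a b c a' b' c' : W) :
    B (a ⊗ₜ[F3] (b ⊗ₜ[F3] c)) (a' ⊗ₜ[F3] (b' ⊗ₜ[F3] c')) = ω a a' * ω b b' * ω c c' := by
  simp [B, smul_eq_mul]; ring

/-- The map `d₂ - 1`. -/
local notation "M" => d₂ - (LinearMap.id : V →ₗ[F3] V)

lemma M_tmul (a b c : W) : M (a ⊗ₜ[F3] (b ⊗ₜ[F3] c)) = (d a) ⊗ₜ[F3] ((dinv b) ⊗ₜ[F3] c) - a ⊗ₜ[F3] (b ⊗ₜ[F3] c) := by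
  simp [d₂]

lemma M_Eee : M Eee = 0 := by rw [M_tmul, d_e, dinv_e]; abel
lemma M_Eef : M Eef = 0 := by rw [M_tmul, d_e, dinv_e]; abel
lemma M_Efe : M Efe = -Eee := by
  rw [M_tmul, d_e, dinv_f]; rw [TensorProduct.sub_tmul, TensorProduct.tmul_sub]; abel
lemma M_Eff : M Eff = -Eef := by
  rw [M_tmul, d_e, dinv_f]; rw [TensorProduct.sub_tmul, TensorProduct.tmul_sub]; abel
lemma M_Fee : M Fee = Eee := by
  rw [M_tmul, d_f, dinv_e]; rw [TensorProduct.add_tmul]; abel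
lemma M_Fef : M Fef = Eef := by
  rw [M_tmul, d_f, dinv_e]; rw [TensorProduct.add_tmul]; abel
lemma M_Ffe : M Ffe = Efe - Eee - Fee := by
  rw [M_tmul, d_f, dinv_f]
  simp only [TensorProduct.add_tmul, TensorProduct.sub_tmul, TensorProduct.tmul_sub,
    TensorProduct.tmul_add]
  abel
lemma M_Fff : M Fff = Eff - Eef - Fef := by
  rw [M_tmul, d_f, dinv_f]
  simp only [TensorProduct.add_tmul, TensorProduct.sub_tmul, TensorProduct.tmul_sub,
    TensorProduct.tmul_add]
  abel

lemma w_decomp (w : W) : w = w 0 • e + w 1 • f := by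
  funext i; fin_cases i <;> simp [e, f]

lemma span_top :
    Submodule.span F3 ({Eee, Eef, Efe, Eff, Fee, Fef, Ffe, Fff} : Set V) = ⊤ := by
  rw [eq_top_iff]
  rintro v -
  induction v using TensorProduct.induction_on with
  | zero => exact Submodule.zero_mem _
  | add x y hx hy => exact add_mem hx hy
  | tmul a t =>
    induction t using TensorProduct.induction_on with
    | zero => rw [TensorProduct.tmul_zero]; exact Submodule.zero_mem _
    | add x y hx hy => rw [TensorProduct.tmul_add]; exact add_mem hx hy
    | tmul b c =>
      rw [w_decomp a, w_decomp b, w_decomp c]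
      simp only [TensorProduct.add_tmul, TensorProduct.tmul_add, ← TensorProduct.smul_tmul',
        TensorProduct.tmul_smul]
      repeat
        first
        | apply add_mem
        | apply Submodule.smul_mem
        | exact Submodule.subset_span (by simp)

lemma neg2_one : (-2 : F3) = 1 := by decide
/-- membership helpers -/
lemma indep_of_pairing {n : ℕ} (v w : Fin n → V)
    (hvw : ∀ i j, B (v j) (w i) = if i = j then 1 else 0) : LinearIndependent F3 v := by
  rw [Fintype.linearIndependent_iff]
  intro g h i
  have h' := congrArg (fun x => B x (w i)) h
  simp only [map_sum, LinearMap.coe_sum, Finset.sum_apply, LinearMap.sum_apply, map_smul,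
    LinearMap.smul_apply, hvw, smul_eq_mul, mul_ite, mul_one, mul_zero, Finset.sum_ite_eq,
    Finset.mem_univ, if_true, LinearMap.map_zero₂] at h'
  exact h'

lemma indep_T : LinearIndependent F3 ![Eee, Eef, Efe - Fee, Eff - Fef] := by
  apply indep_of_pairing _ ![Fff, -Ffe, -Fef, Fee]
  intro i j
  fin_cases i <;> fin_cases j <;>
    simp [map_add, map_sub, map_neg]

lemma indep_S : LinearIndependent F3 ![Eee, Eef, Efe + Fee, Eff + Fef] := by
  apply indep_of_pairing _ ![Fff, -Ffe, -Fef, Fee]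
  intro i j
  fin_cases i <;> fin_cases j <;>
    simp [map_add, map_sub, map_neg]

lemma indep_2 : LinearIndependent F3 ![Eee, Eef] := by
  apply indep_of_pairing _ ![Fff, -Ffe]
  intro i j
  fin_cases i <;> fin_cases j <;>
    simp [map_add, map_sub, map_neg]

lemma range_eq_T :
    LinearMap.range M = Submodule.span F3
      ({Eee, Eef, Efe - Fee, Eff - Fef} : Set V) := by
  rw [LinearMap.range_eq_map, ← span_top, Submodule.map_span]
  rw [show M '' {Eee, Eef, Efe, Eff, Fee, Fef, Ffe, Fff} =
      ({0, 0, -Eee, -Eef, Eee, Eef, Efe - Eee - Fee, Eff - Eef - Fef} : Set V) by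
    simp only [Set.image_insert_eq, Set.image_singleton, M_Eee, M_Eef, M_Efe, M_Eff, M_Fee,
      M_Fef, M_Ffe, M_Fff]]
  apply le_antisymm
  · rw [Submodule.span_le]
    simp only [Set.insert_subset_iff, Set.singleton_subset_iff, SetLike.mem_coe]
    refine ⟨Submodule.zero_mem _, Submodule.zero_mem _,
      neg_mem (Submodule.subset_span (Set.mem_insert _ _)),
      neg_mem (Submodule.subset_span (Set.mem_insert_of_mem _ (Set.mem_insert _ _))),
      Submodule.subset_span (Set.mem_insert _ _),
      Submodule.subset_span (Set.mem_insert_of_mem _ (Set.mem_insert _ _)), ?_, ?_⟩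
    · have h : Efe - Eee - Fee = (Efe - Fee) - Eee := by abel
      rw [h]
      exact sub_mem
        (Submodule.subset_span (Set.mem_insert_of_mem _ (Set.mem_insert_of_mem _
          (Set.mem_insert _ _))))
        (Submodule.subset_span (Set.mem_insert _ _))
    · have h : Eff - Eef - Fef = (Eff - Fef) - Eef := by abel
      rw [h]
      exact sub_mem
        (Submodule.subset_span (Set.mem_insert_of_mem _ (Set.mem_insert_of_mem _
          (Set.mem_insert_of_mem _ (Set.mem_singleton _)))))
        (Submodule.subset_span (Set.mem_insert_of_mem _ (Set.mem_insert _ _)))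
  · rw [Submodule.span_le]
    simp only [Set.insert_subset_iff, Set.singleton_subset_iff, SetLike.mem_coe]
    have heee : Eee ∈ ({0, 0, -Eee, -Eef, Eee, Eef, Efe - Eee - Fee, Eff - Eef - Fef} : Set V) :=
      Set.mem_insert_of_mem _ (Set.mem_insert_of_mem _ (Set.mem_insert_of_mem _
        (Set.mem_insert_of_mem _ (Set.mem_insert _ _))))
    have heef : Eef ∈ ({0, 0, -Eee, -Eef, Eee, Eef, Efe - Eee - Fee, Eff - Eef - Fef} : Set V) :=
      Set.mem_insert_of_mem _ (Set.mem_insert_of_mem _ (Set.mem_insert_of_mem _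
        (Set.mem_insert_of_mem _ (Set.mem_insert_of_mem _ (Set.mem_insert _ _)))))
    have h7 : Efe - Eee - Fee ∈
        ({0, 0, -Eee, -Eef, Eee, Eef, Efe - Eee - Fee, Eff - Eef - Fef} : Set V) :=
      Set.mem_insert_of_mem _ (Set.mem_insert_of_mem _ (Set.mem_insert_of_mem _
        (Set.mem_insert_of_mem _ (Set.mem_insert_of_mem _ (Set.mem_insert_of_mem _
          (Set.mem_insert _ _))))))
    have h8 : Eff - Eef - Fef ∈
        ({0, 0, -Eee, -Eef, Eee, Eef, Efe - Eee - Fee, Eff - Eef - Fef} : Set V) :=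
      Set.mem_insert_of_mem _ (Set.mem_insert_of_mem _ (Set.mem_insert_of_mem _
        (Set.mem_insert_of_mem _ (Set.mem_insert_of_mem _ (Set.mem_insert_of_mem _
          (Set.mem_insert_of_mem _ (Set.mem_singleton _)))))))
    refine ⟨Submodule.subset_span heee, Submodule.subset_span heef, ?_, ?_⟩
    · have h : Efe - Fee = (Efe - Eee - Fee) + Eee := by abel
      rw [h]
      exact add_mem (Submodule.subset_span h7) (Submodule.subset_span heee)
    · have h : Eff - Fef = (Eff - Eef - Fef) + Eef := by abel
      rw [h]
      exact add_mem (Submodule.subset_span h8) (Submodule.subset_span heef)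
lemma MM_Eee : (M ∘ₗ M) Eee = 0 := by rw [LinearMap.comp_apply, M_Eee, LinearMap.map_zero]
lemma MM_Eef : (M ∘ₗ M) Eef = 0 := by rw [LinearMap.comp_apply, M_Eef, LinearMap.map_zero]
lemma MM_Efe : (M ∘ₗ M) Efe = 0 := by
  rw [LinearMap.comp_apply, M_Efe, map_neg, M_Eee, neg_zero]
lemma MM_Eff : (M ∘ₗ M) Eff = 0 := by
  rw [LinearMap.comp_apply, M_Eff, map_neg, M_Eef, neg_zero]
lemma MM_Fee : (M ∘ₗ M) Fee = 0 := by rw [LinearMap.comp_apply, M_Fee, M_Eee]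
lemma MM_Fef : (M ∘ₗ M) Fef = 0 := by rw [LinearMap.comp_apply, M_Fef, M_Eef]
lemma MM_Ffe : (M ∘ₗ M) Ffe = Eee := by
  rw [LinearMap.comp_apply, M_Ffe, map_sub, map_sub, M_Efe, M_Eee, M_Fee]
  have h : -Eee - 0 - Eee = (-2 : F3) • Eee := by module
  rw [h, neg2_one, one_smul]
lemma MM_Fff : (M ∘ₗ M) Fff = Eef := by
  rw [LinearMap.comp_apply, M_Fff, map_sub, map_sub, M_Eff, M_Eef, M_Fef]
  have h : -Eef - 0 - Eef = (-2 : F3) • Eef := by module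
  rw [h, neg2_one, one_smul]

lemma range_MM :
    LinearMap.range (M ∘ₗ M) = Submodule.span F3 ({Eee, Eef} : Set V) := by
  rw [LinearMap.range_eq_map, ← span_top, Submodule.map_span]
  rw [show (M ∘ₗ M) '' {Eee, Eef, Efe, Eff, Fee, Fef, Ffe, Fff} =
      ({0, 0, 0, 0, 0, 0, Eee, Eef} : Set V) by
    simp only [Set.image_insert_eq, Set.image_singleton, MM_Eee, MM_Eef, MM_Efe, MM_Eff,
      MM_Fee, MM_Fef, MM_Ffe, MM_Fff]]
  apply le_antisymm
  · rw [Submodule.span_le]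
    simp only [Set.insert_subset_iff, Set.singleton_subset_iff, SetLike.mem_coe]
    exact ⟨Submodule.zero_mem _, Submodule.zero_mem _, Submodule.zero_mem _,
      Submodule.zero_mem _, Submodule.zero_mem _, Submodule.zero_mem _,
      Submodule.subset_span (Set.mem_insert _ _),
      Submodule.subset_span (Set.mem_insert_of_mem _ (Set.mem_singleton _))⟩
  · rw [Submodule.span_le]
    simp only [Set.insert_subset_iff, Set.singleton_subset_iff, SetLike.mem_coe]
    constructor
    · refine Submodule.subset_span ?_
      exact Set.mem_insert_of_mem _ (Set.mem_insert_of_mem _ (Set.mem_insert_of_mem _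
        (Set.mem_insert_of_mem _ (Set.mem_insert_of_mem _ (Set.mem_insert_of_mem _
          (Set.mem_insert _ _))))))
    · refine Submodule.subset_span ?_
      exact Set.mem_insert_of_mem _ (Set.mem_insert_of_mem _ (Set.mem_insert_of_mem _
        (Set.mem_insert_of_mem _ (Set.mem_insert_of_mem _ (Set.mem_insert_of_mem _
          (Set.mem_insert_of_mem _ (Set.mem_singleton _)))))))

lemma finrank_V : Module.finrank F3 V = 8 := by
  rw [Module.finrank_tensorProduct, Module.finrank_tensorProduct]
  simp

lemma range_T_set : Set.range ![Eee, Eef, Efe - Fee, Eff - Fef] =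
    ({Eee, Eef, Efe - Fee, Eff - Fef} : Set V) := by
  ext x
  simp only [Matrix.range_cons, Matrix.range_empty, Set.union_empty, Set.mem_union,
    Set.mem_singleton_iff, Set.mem_insert_iff]

lemma range_S_set : Set.range ![Eee, Eef, Efe + Fee, Eff + Fef] =
    ({Eee, Eef, Efe + Fee, Eff + Fef} : Set V) := by
  ext x
  simp only [Matrix.range_cons, Matrix.range_empty, Set.union_empty, Set.mem_union,
    Set.mem_singleton_iff, Set.mem_insert_iff]

lemma range_2_set : Set.range ![Eee, Eef] = ({Eee, Eef} : Set V) := by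
  ext x
  simp only [Matrix.range_cons, Matrix.range_empty, Set.union_empty, Set.mem_union,
    Set.mem_singleton_iff, Set.mem_insert_iff]

lemma finrank_T : Module.finrank F3
    (Submodule.span F3 ({Eee, Eef, Efe - Fee, Eff - Fef} : Set V)) = 4 := by
  rw [← range_T_set, finrank_span_eq_card indep_T]; rfl

lemma finrank_S : Module.finrank F3
    (Submodule.span F3 ({Eee, Eef, Efe + Fee, Eff + Fef} : Set V)) = 4 := by
  rw [← range_S_set, finrank_span_eq_card indep_S]; rfl

lemma finrank_2 : Module.finrank F3
    (Submodule.span F3 ({Eee, Eef} : Set V)) = 2 := by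
  rw [← range_2_set, finrank_span_eq_card indep_2]; rfl

lemma ker_eq_S :
    LinearMap.ker M = Submodule.span F3 ({Eee, Eef, Efe + Fee, Eff + Fef} : Set V) := by
  have hle : Submodule.span F3 ({Eee, Eef, Efe + Fee, Eff + Fef} : Set V) ≤ LinearMap.ker M := by
    rw [Submodule.span_le]
    simp only [Set.insert_subset_iff, Set.singleton_subset_iff, SetLike.mem_coe,
      LinearMap.mem_ker]
    refine ⟨M_Eee, M_Eef, ?_, ?_⟩
    · rw [map_add, M_Efe, M_Fee]; abel
    · rw [map_add, M_Eff, M_Fef]; abel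
  have hker : Module.finrank F3 (LinearMap.ker M) = 4 := by
    have := LinearMap.finrank_range_add_finrank_ker M
    rw [finrank_V, range_eq_T, finrank_T] at this
    omega
  exact (Submodule.eq_of_le_of_finrank_eq hle (by rw [finrank_S, hker])).symm
/-- **Lemma 3.1(ii).** `C_V(d₂) = span{e⊗e⊗x, (e⊗f+f⊗e)⊗x : x ∈ {e,f}}` and
`[V,d₂] = span{e⊗e⊗x, (e⊗f−f⊗e)⊗x : x ∈ {e,f}}` have dimension 4, and
`[V,d₂,d₂] = span{e⊗e⊗x : x ∈ {e,f}}` has dimension 2; in particular `d₂` is not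
quadratic and `C_V(d₂)` is not totally isotropic. -/
theorem stmt_6 :
    CV d₂ = Submodule.span F3
      {e ⊗ₜ[F3] (e ⊗ₜ[F3] e), e ⊗ₜ[F3] (e ⊗ₜ[F3] f),
       e ⊗ₜ[F3] (f ⊗ₜ[F3] e) + f ⊗ₜ[F3] (e ⊗ₜ[F3] e),
       e ⊗ₜ[F3] (f ⊗ₜ[F3] f) + f ⊗ₜ[F3] (e ⊗ₜ[F3] f)} ∧
    Module.finrank F3 (CV d₂) = 4 ∧
    comm1 d₂ = Submodule.span F3
      {e ⊗ₜ[F3] (e ⊗ₜ[F3] e), e ⊗ₜ[F3] (e ⊗ₜ[F3] f),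
       e ⊗ₜ[F3] (f ⊗ₜ[F3] e) - f ⊗ₜ[F3] (e ⊗ₜ[F3] e),
       e ⊗ₜ[F3] (f ⊗ₜ[F3] f) - f ⊗ₜ[F3] (e ⊗ₜ[F3] f)} ∧
    Module.finrank F3 (comm1 d₂) = 4 ∧
    comm2 d₂ = Submodule.span F3
      {e ⊗ₜ[F3] (e ⊗ₜ[F3] e), e ⊗ₜ[F3] (e ⊗ₜ[F3] f)} ∧
    Module.finrank F3 (comm2 d₂) = 2 ∧
    comm2 d₂ ≠ ⊥ ∧
    ¬ TotallyIsotropic (CV d₂) := by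
  have hCV : CV d₂ = Submodule.span F3 ({Eee, Eef, Efe + Fee, Eff + Fef} : Set V) := ker_eq_S
  have hc1 : comm1 d₂ = Submodule.span F3 ({Eee, Eef, Efe - Fee, Eff - Fef} : Set V) := range_eq_T
  have hc2 : comm2 d₂ = Submodule.span F3 ({Eee, Eef} : Set V) := range_MM
  refine ⟨hCV, by rw [hCV, finrank_S], hc1, by rw [hc1, finrank_T], hc2, by rw [hc2, finrank_2],
    ?_, ?_⟩
  · intro hbot
    have hmem : Eee ∈ comm2 d₂ := hc2 ▸ Submodule.subset_span (Set.mem_insert _ _)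
    rw [hbot, Submodule.mem_bot] at hmem
    have h0 := congrArg (fun x => B x Fff) hmem
    simp only [B_tmul, ω_ef, ω_ff, LinearMap.map_zero₂, mul_one, one_mul] at h0
    exact one_ne_zero h0
  · intro h
    have hu : Efe + Fee ∈ CV d₂ := by
      rw [hCV]
      exact Submodule.subset_span (Set.mem_insert_of_mem _ (Set.mem_insert_of_mem _
        (Set.mem_insert _ _)))
    have hv : Eff + Fef ∈ CV d₂ := by
      rw [hCV]
      exact Submodule.subset_span (Set.mem_insert_of_mem _ (Set.mem_insert_of_mem _
        (Set.mem_insert_of_mem _ (Set.mem_singleton _))))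
    have h0 := h _ hu _ hv
    simp only [map_add, LinearMap.add_apply] at h0
    simp only [B_tmul, ω_ee, ω_ef, ω_fe, ω_ff, mul_one, one_mul, mul_zero, zero_mul,
      mul_neg, neg_mul, neg_neg, add_zero, zero_add] at h0
    revert h0
    decide
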